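/- For 1 ≤ p < ∞ and any vector z = (u,v) ∈ ℂ² with ‖z‖_p = 1 and u ≠ 0 and v ≠ 0, the following are equivalent: (i) both [F₁ z, z]_p and [F₂ z, z]_p are nonnegative real numbers (i.e., σ₂ is a physical quantity at the pure state |z⟩); (ii) the complex number w = i·((v/u)·|u|^p − (u/v)·|v|^p) is real and satisfies −1 ≤ w ≤ 1. -/

import Mathlib

/-- sign of a complex number: `u/|u|` if `u ≠ 0`, else `0`. -/
noncomputable def csign (u : ℂ) : ℂ := if u = 0 then 0 else u / (‖u‖ : ℂ)

/-- the `p`-norm on `ℂ²`: `‖(a,b)‖_p = (|a|^p + |b|^p)^{1/p}`. -/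
noncomputable def pnorm (p : ℝ) (x : Fin 2 → ℂ) : ℝ :=
  (‖x 0‖ ^ p + ‖x 1‖ ^ p) ^ (1 / p)

/-- the semi-inner product `[x,y]_p = ‖y‖_p^{2-p} (a·sign(c̄)|c|^{p-1} + b·sign(d̄)|d|^{p-1})`. -/
noncomputable def sip (p : ℝ) (x y : Fin 2 → ℂ) : ℂ :=
  ((pnorm p y ^ (2 - p) : ℝ) : ℂ) *
    (x 0 * csign ((starRingEnd ℂ) (y 0)) * ((‖y 0‖ ^ (p - 1) : ℝ) : ℂ) +
     x 1 * csign ((starRingEnd ℂ) (y 1)) * ((‖y 1‖ ^ (p - 1) : ℝ) : ℂ))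

/-!
On a `p`-unit vector `z` with nonzero coordinates, `sign(z̄ⱼ)|zⱼ|^{p-1} = |zⱼ|^p / zⱼ`, so
`[x, z]_p = x₀|z₀|^p/z₀ + x₁|z₁|^p/z₁`, while `|z₀|^p + |z₁|^p = 1`. Substituting `F₁z` and `F₂z`
gives `[F₁z, z]_p = (1 - w)/2` and `[F₂z, z]_p = (1 + w)/2`; both are nonnegative reals exactly
when `w` is real with `-1 ≤ w ≤ 1`.
-/

open Complex ComplexConjugate

lemma csign_conj_mul_norm_rpow_sub_one {u : ℂ} (hu : u ≠ 0) (p : ℝ) :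
    csign (conj u) * ((‖u‖ ^ (p - 1) : ℝ) : ℂ) = ((‖u‖ ^ p : ℝ) : ℂ) / u := by
  have hnorm : 0 < ‖u‖ := norm_pos_iff.mpr hu
  have hsign : csign (conj u) = conj u / (‖u‖ : ℂ) := by
    rw [csign, if_neg ((map_ne_zero _).mpr hu), norm_conj]
  have hnorm' : (‖u‖ : ℂ) ≠ 0 := ofReal_ne_zero.mpr hnorm.ne'
  rw [hsign, Real.rpow_sub_one hnorm.ne', eq_div_iff hu]
  push_cast
  field_simp
  linear_combination ((‖u‖ ^ p : ℝ) : ℂ) * mul_conj' u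

lemma norm_rpow_add_norm_rpow_of_pnorm_eq_one {p : ℝ} (hp : p ≠ 0) {z : Fin 2 → ℂ}
    (hz : pnorm p z = 1) : ‖z 0‖ ^ p + ‖z 1‖ ^ p = 1 := by
  have hpow : ((‖z 0‖ ^ p + ‖z 1‖ ^ p) ^ (1 / p)) ^ p = 1 := by
    rw [← pnorm, hz, Real.one_rpow]
  rwa [← Real.rpow_mul (by positivity), one_div_mul_cancel hp, Real.rpow_one] at hpow

lemma sip_of_pnorm_eq_one {p : ℝ} {y : Fin 2 → ℂ} (hy : pnorm p y = 1)
    (hy₀ : y 0 ≠ 0) (hy₁ : y 1 ≠ 0) (x : Fin 2 → ℂ) :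
    sip p x y = x 0 * ((‖y 0‖ ^ p : ℝ) : ℂ) / y 0 + x 1 * ((‖y 1‖ ^ p : ℝ) : ℂ) / y 1 := by
  rw [sip, hy, Real.one_rpow, mul_assoc (x 0), mul_assoc (x 1),
    csign_conj_mul_norm_rpow_sub_one hy₀, csign_conj_mul_norm_rpow_sub_one hy₁]
  push_cast
  ring

noncomputable def sigma2Coeff (p : ℝ) (z : Fin 2 → ℂ) : ℂ :=
  I * (z 1 / z 0 * ((‖z 0‖ ^ p : ℝ) : ℂ) - z 0 / z 1 * ((‖z 1‖ ^ p : ℝ) : ℂ))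

section UnitVector

variable {p : ℝ} (hp : p ≠ 0) {z : Fin 2 → ℂ} (hz : pnorm p z = 1) (hu : z 0 ≠ 0) (hv : z 1 ≠ 0)
include hp hz hu hv

lemma sip_sigma2PlusProj_mulVec_self :
    sip p ((!![1 / 2, -I / 2; I / 2, 1 / 2] : Matrix (Fin 2) (Fin 2) ℂ).mulVec z) z =
      (1 - sigma2Coeff p z) / 2 := by
  have hsum : ((‖z 0‖ ^ p : ℝ) : ℂ) + ((‖z 1‖ ^ p : ℝ) : ℂ) = 1 := by
    exact_mod_cast norm_rpow_add_norm_rpow_of_pnorm_eq_one hp hz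
  rw [sip_of_pnorm_eq_one hz hu hv, sigma2Coeff]
  simp [Matrix.mulVec, dotProduct, Fin.sum_univ_two]
  field_simp
  linear_combination (z 0 * z 1) * hsum

lemma sip_sigma2MinusProj_mulVec_self :
    sip p ((!![1 / 2, I / 2; -I / 2, 1 / 2] : Matrix (Fin 2) (Fin 2) ℂ).mulVec z) z =
      (1 + sigma2Coeff p z) / 2 := by
  have hsum : ((‖z 0‖ ^ p : ℝ) : ℂ) + ((‖z 1‖ ^ p : ℝ) : ℂ) = 1 := by
    exact_mod_cast norm_rpow_add_norm_rpow_of_pnorm_eq_one hp hz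
  rw [sip_of_pnorm_eq_one hz hu hv, sigma2Coeff]
  simp [Matrix.mulVec, dotProduct, Fin.sum_univ_two]
  field_simp
  linear_combination (z 0 * z 1) * hsum

end UnitVector

lemma half_one_sub_and_half_one_add_real_nonneg_iff (w : ℂ) :
    ((((1 - w) / 2).im = 0 ∧ 0 ≤ ((1 - w) / 2).re) ∧
      (((1 + w) / 2).im = 0 ∧ 0 ≤ ((1 + w) / 2).re)) ↔
      w.im = 0 ∧ -1 ≤ w.re ∧ w.re ≤ 1 := by
  simp only [div_ofNat_im, div_ofNat_re, sub_im, sub_re, add_im, add_re, one_im, one_re]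
  constructor
  · rintro ⟨⟨him, hre₁⟩, -, hre₂⟩
    exact ⟨by linarith, by linarith, by linarith⟩
  · rintro ⟨him, hre₁, hre₂⟩
    exact ⟨⟨by linarith, by linarith⟩, by linarith, by linarith⟩

/-- for `1 ≤ p < ∞` and a unit vector `z = (u,v)` in `(ℂ², ‖·‖_p)` with
`u ≠ 0` and `v ≠ 0`: both `[F₁z,z]_p` and `[F₂z,z]_p` are nonnegative real numbers
(i.e. `σ₂` is a physical quantity at `|z⟩`) if and only if
`w = i((v/u)|u|^p - (u/v)|v|^p)` is real with `-1 ≤ w ≤ 1`. -/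
theorem pauli_sigma2_physical_quantity_iff (p : ℝ) (hp : 1 ≤ p)
    (F₁ F₂ : Matrix (Fin 2) (Fin 2) ℂ)
    (hF₁ : F₁ = !![1 / 2, -Complex.I / 2; Complex.I / 2, 1 / 2])
    (hF₂ : F₂ = !![1 / 2, Complex.I / 2; -Complex.I / 2, 1 / 2])
    (z : Fin 2 → ℂ) (hz : pnorm p z = 1) (hu : z 0 ≠ 0) (hv : z 1 ≠ 0) :
    (((sip p (F₁.mulVec z) z).im = 0 ∧ 0 ≤ (sip p (F₁.mulVec z) z).re) ∧
     ((sip p (F₂.mulVec z) z).im = 0 ∧ 0 ≤ (sip p (F₂.mulVec z) z).re)) ↔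
    ((Complex.I * (z 1 / z 0 * ((‖z 0‖ ^ p : ℝ) : ℂ)
        - z 0 / z 1 * ((‖z 1‖ ^ p : ℝ) : ℂ))).im = 0 ∧
      -1 ≤ (Complex.I * (z 1 / z 0 * ((‖z 0‖ ^ p : ℝ) : ℂ)
        - z 0 / z 1 * ((‖z 1‖ ^ p : ℝ) : ℂ))).re ∧
      (Complex.I * (z 1 / z 0 * ((‖z 0‖ ^ p : ℝ) : ℂ)
        - z 0 / z 1 * ((‖z 1‖ ^ p : ℝ) : ℂ))).re ≤ 1) := by
  have hp₀ : p ≠ 0 := by linarith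
  subst hF₁ hF₂
  rw [sip_sigma2PlusProj_mulVec_self hp₀ hz hu hv, sip_sigma2MinusProj_mulVec_self hp₀ hz hu hv]
  exact half_one_sub_and_half_one_add_real_nonneg_iff _
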